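/- For closed cones K₁ ⊆ K₂ ⊆ ℝ^d, the cone angles satisfy ∠K₁ ≤ 2·∠K₂, where cos(∠K) := max_{u∈K∩S^{d−1}} min_{u'∈K∩S^{d−1}} ⟨u,u'⟩. Moreover, this bound is tight: there exist cones K₁ ⊆ K₂ with ∠K₁ = 2·∠K₂. -/

import Mathlib

/-!
Let `maxAngle S u` be the largest angle between `u` and a point of `S`. As `arccos` is continuous
and decreasing, `∠K` is the least value of `maxAngle S u` over `u ∈ S = K ∩ S^{d-1}`. For
`S₁ ⊆ S₂`, `u ∈ S₁` and `w ∈ S₂`, the triangle inequality for angles gives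
`maxAngle S₁ u ≤ maxAngle S₂ u ≤ angle w u + maxAngle S₂ w ≤ 2 maxAngle S₂ w`, and minimising
over `w` yields `∠K₁ ≤ 2 ∠K₂`.

Equality: the unit vectors `e₁, e₂` of the coordinate rays are at angle `π/2`, while the unit vector
of the diagonal ray is within angle `π/4` of `e₁`, `e₂` and itself.
-/

open scoped BigOperators RealInnerProductSpace

noncomputable section

/-- `cos(∠K) = max_{u ∈ K ∩ S} min_{u' ∈ K ∩ S} ⟨u, u'⟩`; the angle is recovered via `arccos`. -/
def coneAngle {d : ℕ} (K : Set (EuclideanSpace ℝ (Fin d))) : ℝ :=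
  Real.arccos (sSup ((fun u => sInf ((fun v => (⟪u, v⟫ : ℝ)) ''
    (K ∩ Metric.sphere 0 1))) '' (K ∩ Metric.sphere 0 1)))

open Real Set InnerProductGeometry

section Angles

variable {V : Type*} [NormedAddCommGroup V] [InnerProductSpace ℝ V]

def maxAngle (S : Set V) (u : V) : ℝ := sSup (angle u '' S)

def minMaxAngle (S : Set V) : ℝ := sInf (maxAngle S '' S)

lemma bddAbove_angle_image (S : Set V) (u : V) : BddAbove (angle u '' S) :=
  ⟨π, forall_mem_image.2 fun v _ => angle_le_pi u v⟩

lemma angle_le_maxAngle {S : Set V} (u : V) {v : V} (hv : v ∈ S) : angle u v ≤ maxAngle S u :=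
  le_csSup (bddAbove_angle_image S u) (mem_image_of_mem _ hv)

lemma maxAngle_nonneg {S : Set V} (hS : S.Nonempty) (u : V) : 0 ≤ maxAngle S u :=
  (angle_nonneg _ _).trans (angle_le_maxAngle u hS.some_mem)

lemma maxAngle_mono {S T : Set V} (hST : S ⊆ T) (hS : S.Nonempty) (u : V) :
    maxAngle S u ≤ maxAngle T u :=
  csSup_le_csSup (bddAbove_angle_image T u) (hS.image _) (image_mono hST)

lemma maxAngle_le_two_mul {S : Set V} {u w : V} (hu : u ∈ S) (hw : w ∈ S) :
    maxAngle S u ≤ 2 * maxAngle S w := by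
  refine csSup_le ⟨_, mem_image_of_mem _ hw⟩ (forall_mem_image.2 fun v hv => ?_)
  calc angle u v ≤ angle w u + angle w v := angle_comm u w ▸ angle_le_angle_add_angle u w v
    _ ≤ 2 * maxAngle S w := by linarith [angle_le_maxAngle w hu, angle_le_maxAngle w hv]

lemma minMaxAngle_le_maxAngle {S : Set V} {u : V} (hu : u ∈ S) : minMaxAngle S ≤ maxAngle S u :=
  csInf_le ⟨0, forall_mem_image.2 fun _ _ => maxAngle_nonneg ⟨u, hu⟩ _⟩ (mem_image_of_mem _ hu)

theorem minMaxAngle_le_two_mul {S T : Set V} (hST : S ⊆ T) (hS : S.Nonempty) :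
    minMaxAngle S ≤ 2 * minMaxAngle T := by
  obtain ⟨u, hu⟩ := hS
  have hhalf : maxAngle T u / 2 ≤ minMaxAngle T :=
    le_csInf ⟨_, mem_image_of_mem _ (hST hu)⟩ (forall_mem_image.2 fun w hw => by
      linarith [maxAngle_le_two_mul (hST hu) hw])
  calc minMaxAngle S ≤ maxAngle S u := minMaxAngle_le_maxAngle hu
    _ ≤ maxAngle T u := maxAngle_mono hST ⟨u, hu⟩ u
    _ ≤ 2 * minMaxAngle T := by linarith

lemma minMaxAngle_pair {u v : V} (hu : u ≠ 0) (hv : v ≠ 0) : minMaxAngle {u, v} = angle u v := by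
  simp [minMaxAngle, maxAngle, image_pair, angle_self hu, angle_self hv, angle_comm v u,
    angle_nonneg]

lemma angle_eq_arccos_inner {u v : V} (hu : ‖u‖ = 1) (hv : ‖v‖ = 1) :
    angle u v = arccos ⟪u, v⟫ := by
  simp [angle, hu, hv]

lemma bddBelow_inner_image {S : Set V} (hS : S ⊆ Metric.sphere 0 1) {u : V} (hu : ‖u‖ = 1) :
    BddBelow ((fun v => ⟪u, v⟫) '' S) :=
  ⟨-1, forall_mem_image.2 fun _ hv =>
    neg_one_le_real_inner_of_norm_eq_one hu (mem_sphere_zero_iff_norm.1 (hS hv))⟩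

lemma arccos_sInf_inner {S : Set V} (hS : S ⊆ Metric.sphere 0 1) (hne : S.Nonempty) {u : V}
    (hu : ‖u‖ = 1) : arccos (sInf ((fun v => ⟪u, v⟫) '' S)) = maxAngle S u := by
  rw [antitone_arccos.map_csInf_of_continuousAt continuous_arccos.continuousAt (hne.image _)
    (bddBelow_inner_image hS hu), image_image]
  exact congrArg sSup (image_congr fun _ hv =>
    (angle_eq_arccos_inner hu (mem_sphere_zero_iff_norm.1 (hS hv))).symm)

lemma arccos_sSup_sInf_inner {S : Set V} (hS : S ⊆ Metric.sphere 0 1) (hne : S.Nonempty) :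
    arccos (sSup ((fun u => sInf ((fun v => ⟪u, v⟫) '' S)) '' S)) = minMaxAngle S := by
  have hnorm : ∀ u ∈ S, ‖u‖ = 1 := fun u hu => mem_sphere_zero_iff_norm.1 (hS hu)
  have hbdd : BddAbove ((fun u => sInf ((fun v => ⟪u, v⟫) '' S)) '' S) :=
    ⟨1, forall_mem_image.2 fun u hu =>
      (csInf_le (bddBelow_inner_image hS (hnorm u hu)) (mem_image_of_mem _ hu)).trans
        (real_inner_le_one_of_norm_eq_one (hnorm u hu) (hnorm u hu))⟩
  rw [antitone_arccos.map_csSup_of_continuousAt continuous_arccos.continuousAt (hne.image _) hbdd,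
    image_image]
  exact congrArg sInf (image_congr fun u hu => arccos_sInf_inner hS hne (hnorm u hu))

lemma coneAngle_eq_minMaxAngle {d : ℕ} {K : Set (EuclideanSpace ℝ (Fin d))}
    (hK : (K ∩ Metric.sphere 0 1).Nonempty) :
    coneAngle K = minMaxAngle (K ∩ Metric.sphere 0 1) :=
  arccos_sSup_sInf_inner inter_subset_right hK

def ray (v : V) : Set V := (fun t : ℝ => t • v) '' Ici 0

lemma isClosed_ray (v : V) : IsClosed (ray v) :=
  isClosedMap_smul_left v _ isClosed_Ici

lemma smul_mem_ray {v x : V} {t : ℝ} (ht : 0 ≤ t) (hx : x ∈ ray v) : t • x ∈ ray v := by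
  obtain ⟨s, hs, rfl⟩ := hx
  exact ⟨t * s, mul_nonneg ht hs, mul_smul t s v⟩

lemma ray_inter_sphere {v : V} (hv : v ≠ 0) : ray v ∩ Metric.sphere 0 1 = {‖v‖⁻¹ • v} := by
  ext x
  simp only [ray, mem_inter_iff, mem_image, mem_Ici, mem_sphere_zero_iff_norm, mem_singleton_iff]
  constructor
  · rintro ⟨⟨t, ht, rfl⟩, h⟩
    rw [norm_smul, Real.norm_of_nonneg ht] at h
    rw [eq_inv_of_mul_eq_one_left h]
  · rintro rfl
    exact ⟨⟨_, inv_nonneg.2 (norm_nonneg v), rfl⟩, norm_smul_inv_norm hv⟩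

-- The paper's `cone G`: the union of the rays through `G`, not the convex cone spanned by `G`.
def rayCone (G : Set V) : Set V := ⋃ v ∈ G, ray v

lemma isClosed_rayCone {G : Set V} (hG : G.Finite) : IsClosed (rayCone G) :=
  hG.isClosed_biUnion fun v _ => isClosed_ray v

lemma smul_mem_rayCone {G : Set V} {x : V} {t : ℝ} (ht : 0 ≤ t) (hx : x ∈ rayCone G) :
    t • x ∈ rayCone G := by
  simp only [rayCone, mem_iUnion₂] at hx ⊢
  obtain ⟨v, hv, hx⟩ := hx
  exact ⟨v, hv, smul_mem_ray ht hx⟩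

lemma rayCone_mono {G H : Set V} (hGH : G ⊆ H) : rayCone G ⊆ rayCone H :=
  biUnion_subset_biUnion_left hGH

lemma rayCone_inter_sphere {G : Set V} (hG : ∀ v ∈ G, v ≠ 0) :
    rayCone G ∩ Metric.sphere 0 1 = (fun v => ‖v‖⁻¹ • v) '' G := by
  rw [rayCone, iUnion₂_inter, ← biUnion_of_singleton (_ '' G), biUnion_image]
  exact iUnion₂_congr fun v hv => ray_inter_sphere (hG v hv)

lemma angle_add_eq_pi_div_four {x y : V} (h : ⟪x, y⟫ = 0) (hxy : ‖x‖ = ‖y‖) (hx : x ≠ 0) :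
    angle x (x + y) = π / 4 := by
  rw [angle_add_eq_arctan_of_inner_eq_zero h hx, hxy, div_self (hxy ▸ norm_ne_zero_iff.2 hx),
    arctan_one]

lemma Orthonormal.add_ne_zero {ι : Type*} {e : ι → V} (he : Orthonormal ℝ e) {i j : ι}
    (hij : i ≠ j) : e i + e j ≠ 0 := fun h => by
  simpa [inner_add_right, he.2 hij, real_inner_self_eq_norm_sq, he.1 i] using
    congrArg (⟪e i, ·⟫) h

lemma minMaxAngle_orthonormal_diagonal {e : Fin 2 → V} (he : Orthonormal ℝ e) :
    minMaxAngle {e 0, e 1, ‖e 0 + e 1‖⁻¹ • (e 0 + e 1)} = π / 4 := by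
  set w := ‖e 0 + e 1‖⁻¹ • (e 0 + e 1)
  have h01 : ⟪e 0, e 1⟫ = 0 := he.2 (by decide)
  have hpos : 0 < ‖e 0 + e 1‖⁻¹ := inv_pos.2 (norm_pos_iff.2 (he.add_ne_zero (by decide)))
  have hw : w ≠ 0 := smul_ne_zero hpos.ne' (he.add_ne_zero (by decide))
  have h0w : angle (e 0) w = π / 4 := by
    rw [angle_smul_right_of_pos _ _ hpos,
      angle_add_eq_pi_div_four h01 ((he.1 0).trans (he.1 1).symm) (he.ne_zero 0)]
  have h1w : angle (e 1) w = π / 4 := by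
    rw [angle_smul_right_of_pos _ _ hpos, add_comm, angle_add_eq_pi_div_four
      (real_inner_comm (e 0) (e 1) ▸ h01) ((he.1 1).trans (he.1 0).symm) (he.ne_zero 1)]
  have h01' : angle (e 0) (e 1) = π / 2 := (inner_eq_zero_iff_angle_eq_pi_div_two _ _).1 h01
  have hle : π / 4 ≤ π / 2 := by linarith [pi_pos]
  have hnn : 0 ≤ π / 4 := by positivity
  simp [minMaxAngle, maxAngle, image_insert_eq, angle_self (he.ne_zero 0),
    angle_self (he.ne_zero 1), angle_self hw, angle_comm w, angle_comm (e 1) (e 0), h0w, h1w,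
    h01', csSup_insert, csInf_insert, hle, hnn, hnn.trans hle]

lemma minMaxAngle_orthonormal {e : Fin 2 → V} (he : Orthonormal ℝ e) :
    minMaxAngle {e 0, e 1} = π / 2 := by
  rw [minMaxAngle_pair (he.ne_zero 0) (he.ne_zero 1),
    ← inner_eq_zero_iff_angle_eq_pi_div_two, he.2 (by decide)]

lemma rayCone_orthonormal_inter_sphere {e : Fin 2 → V} (he : Orthonormal ℝ e) :
    rayCone {e 0, e 1} ∩ Metric.sphere 0 1 = {e 0, e 1} := by
  rw [rayCone_inter_sphere (by simp [he.ne_zero]), image_pair, he.1, he.1, inv_one, one_smul,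
    one_smul]

lemma rayCone_orthonormal_diagonal_inter_sphere {e : Fin 2 → V} (he : Orthonormal ℝ e) :
    rayCone {e 0, e 1, e 0 + e 1} ∩ Metric.sphere 0 1 =
      {e 0, e 1, ‖e 0 + e 1‖⁻¹ • (e 0 + e 1)} := by
  rw [rayCone_inter_sphere (by simp [he.ne_zero, he.add_ne_zero (i := 0) (j := 1) (by decide)]),
    image_insert_eq, image_pair, he.1, he.1, inv_one, one_smul, one_smul]

end Angles

/-- For nested nonempty closed cones `K₁ ⊆ K₂ ⊆ ℝ^d`, `∠K₁ ≤ 2 ∠K₂`; moreover this bound is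
tight: there exist cones `K₁ ⊆ K₂` (in `ℝ²`) with `∠K₁ = 2 ∠K₂`. -/
theorem coneAngle_mono_of_subset :
    (∀ (d : ℕ) (K₁ K₂ : Set (EuclideanSpace ℝ (Fin d))),
      IsClosed K₁ → IsClosed K₂ →
      (∀ t : ℝ, 0 < t → ∀ x ∈ K₁, t • x ∈ K₁) →
      (∀ t : ℝ, 0 < t → ∀ x ∈ K₂, t • x ∈ K₂) →
      (K₁ ∩ Metric.sphere 0 1).Nonempty → (K₂ ∩ Metric.sphere 0 1).Nonempty →
      K₁ ⊆ K₂ → coneAngle K₁ ≤ 2 * coneAngle K₂) ∧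
    (∃ K₁ K₂ : Set (EuclideanSpace ℝ (Fin 2)),
      IsClosed K₁ ∧ IsClosed K₂ ∧
      (∀ t : ℝ, 0 < t → ∀ x ∈ K₁, t • x ∈ K₁) ∧
      (∀ t : ℝ, 0 < t → ∀ x ∈ K₂, t • x ∈ K₂) ∧
      (K₁ ∩ Metric.sphere 0 1).Nonempty ∧ (K₂ ∩ Metric.sphere 0 1).Nonempty ∧
      K₁ ⊆ K₂ ∧ coneAngle K₁ = 2 * coneAngle K₂) := by
  refine ⟨fun d K₁ K₂ _ _ _ _ hS₁ hS₂ hsub => ?_, ?_⟩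
  · rw [coneAngle_eq_minMaxAngle hS₁, coneAngle_eq_minMaxAngle hS₂]
    exact minMaxAngle_le_two_mul (inter_subset_inter_left _ hsub) hS₁
  set e : Fin 2 → EuclideanSpace ℝ (Fin 2) := ⇑(EuclideanSpace.basisFun (Fin 2) ℝ)
  have he : Orthonormal ℝ e := (EuclideanSpace.basisFun (Fin 2) ℝ).orthonormal
  have hS₁ := rayCone_orthonormal_inter_sphere he
  have hS₂ := rayCone_orthonormal_diagonal_inter_sphere he
  have hne₁ := (insert_nonempty _ _).mono hS₁.ge
  have hne₂ := (insert_nonempty _ _).mono hS₂.ge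
  refine ⟨_, _, isClosed_rayCone (toFinite _), isClosed_rayCone (toFinite _),
    fun t ht _ => smul_mem_rayCone ht.le, fun t ht _ => smul_mem_rayCone ht.le, hne₁, hne₂,
    rayCone_mono (insert_subset_insert (singleton_subset_iff.2 (mem_insert _ _))), ?_⟩
  rw [coneAngle_eq_minMaxAngle hne₁, hS₁, coneAngle_eq_minMaxAngle hne₂, hS₂,
    minMaxAngle_orthonormal he, minMaxAngle_orthonormal_diagonal he]
  ring
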